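/- arXiv:0809.0346 — 10 statements merged into one kernel-verified Lean document; each statement's English description precedes it below -/
import Mathlib

section
/- For every natural number n ≥ 1, l_n / l_{n+1} > π²; equivalently, l_n > π² · l_{n+1}. -/
/-!
Euler's formula `ζ(2n) = (-1)^(n+1) 2^(2n-1) π^(2n) B_{2n} / (2n)!` rewrites
`l n = 2 ζ(2n) / (π^(2n) · 2n · (2n+1))`. Hence `l n / l (n+1)` equals `π²` times
`ζ(2n) / ζ(2n+2) ≥ 1` times `(2n+2)(2n+3) / (2n(2n+1)) > 1`.
-/

open Real Nat

/-- `l n = |B_{2n}| * 2^(2n) / (2n * (2n+1)!)`. -/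
noncomputable def l (n : ℕ) : ℝ :=
  |((bernoulli (2 * n) : ℚ) : ℝ)| * 2 ^ (2 * n) /
    ((2 * (n : ℝ)) * (Nat.factorial (2 * n + 1) : ℝ))

/-- `ζ(s)` at a natural argument, as a real series; junk value `0` for `s ≤ 1`. -/
noncomputable def zetaNat (s : ℕ) : ℝ := ∑' m : ℕ, 1 / (m : ℝ) ^ s

lemma one_le_zetaNat {s : ℕ} (hs : 1 < s) : 1 ≤ zetaNat s := by
  simpa [zetaNat] using (summable_one_div_nat_pow.mpr hs).le_tsum 1 (fun m _ => by positivity)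

lemma zetaNat_pos {s : ℕ} (hs : 1 < s) : 0 < zetaNat s :=
  one_pos.trans_le (one_le_zetaNat hs)

lemma zetaNat_anti {s t : ℕ} (hs : 1 < s) (hst : s ≤ t) : zetaNat t ≤ zetaNat s := by
  refine Summable.tsum_le_tsum (fun m => ?_) (summable_one_div_nat_pow.mpr (hs.trans_le hst))
    (summable_one_div_nat_pow.mpr hs)
  rcases Nat.eq_zero_or_pos m with rfl | hm
  · simp [zero_pow (by omega : s ≠ 0), zero_pow (by omega : t ≠ 0)]
  · have hm1 : (1 : ℝ) ≤ m := by exact_mod_cast hm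
    gcongr

lemma abs_bernoulli_two_mul_mul_two_pow_div_factorial {k : ℕ} (hk : k ≠ 0) :
    |((bernoulli (2 * k) : ℚ) : ℝ)| * 2 ^ (2 * k) / (2 * k)! =
      2 * zetaNat (2 * k) / π ^ (2 * k) := by
  have hζ : zetaNat (2 * k) = 2 ^ (2 * k - 1) * π ^ (2 * k) *
      |((bernoulli (2 * k) : ℚ) : ℝ)| / (2 * k)! := by
    rw [← abs_of_pos (zetaNat_pos (by omega)), zetaNat, (hasSum_zeta_nat hk).tsum_eq]
    simp [abs_div, abs_mul, abs_of_pos pi_pos]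
  rw [hζ, ← mul_pow_sub_one (by omega : 2 * k ≠ 0) (2 : ℝ)]
  field_simp

lemma l_eq_zetaNat {k : ℕ} (hk : k ≠ 0) :
    l k = 2 * zetaNat (2 * k) / (π ^ (2 * k) * (2 * k) * (2 * k + 1)) := by
  have hfac : ((2 * k + 1)! : ℝ) = (2 * k + 1) * (2 * k)! := by
    rw [Nat.factorial_succ]
    push_cast
    ring
  rw [l, hfac, ← div_div_div_cancel_right₀ (Nat.cast_ne_zero.mpr (2 * k).factorial_ne_zero),
    abs_bernoulli_two_mul_mul_two_pow_div_factorial hk]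
  field_simp

lemma l_pos {k : ℕ} (hk : k ≠ 0) : 0 < l k := by
  rw [l_eq_zetaNat hk]
  have := zetaNat_pos (s := 2 * k) (by omega)
  positivity

lemma pi_sq_mul_l_succ_lt_l {n : ℕ} (hn : n ≠ 0) : π ^ 2 * l (n + 1) < l n := by
  have hζ : 0 < zetaNat (2 * n) := zetaNat_pos (by omega)
  rw [l_eq_zetaNat hn, l_eq_zetaNat n.succ_ne_zero]
  calc π ^ 2 * (2 * zetaNat (2 * (n + 1)) /
          (π ^ (2 * (n + 1)) * (2 * (n + 1 : ℕ)) * (2 * (n + 1 : ℕ) + 1)))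
      = 2 * zetaNat (2 * n + 2) / (π ^ (2 * n) * (2 * n + 2) * (2 * n + 3)) := by
        rw [Nat.mul_add_one 2 n, pow_add]
        push_cast
        field_simp
        ring
    _ ≤ 2 * zetaNat (2 * n) / (π ^ (2 * n) * (2 * n + 2) * (2 * n + 3)) := by
        gcongr
        exact zetaNat_anti (by omega) (by omega)
    _ < 2 * zetaNat (2 * n) / (π ^ (2 * n) * (2 * n) * (2 * n + 1)) := by
        gcongr <;> linarith

/-- For `n ≥ 1`, `l n / l (n+1) > π²`; equivalently `l n > π² * l (n+1)`. -/
theorem stmt3 (n : ℕ) (hn : 1 ≤ n) :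
    l n / l (n + 1) > Real.pi ^ 2 ∧ l n > Real.pi ^ 2 * l (n + 1) := by
  have hlt := pi_sq_mul_l_succ_lt_l (by omega : n ≠ 0)
  exact ⟨(lt_div_iff₀ (l_pos n.succ_ne_zero)).mpr hlt, hlt⟩
end

section
/- Let G be a conjugation-commutative group and let a, b ∈ G satisfy a·b⁻¹·a⁻²·b⁻¹·a·b² = 1. Then a and b commute. -/
/-!
The relation says exactly that `a b` commutes with its conjugate `b (a b) b⁻¹`. Conjugation-
commutativity then makes `a b` commute with `b`, and cancelling `b` shows that `a` commutes with `b`.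
-/

section

variable {G : Type*} [Group G] (a b : G)

theorem rel_eq_one_iff_mul_sq_mul_eq :
    a * b⁻¹ * (a ^ 2)⁻¹ * b⁻¹ * a * b ^ 2 = 1 ↔ a * b ^ 2 * a = b * a ^ 2 * b := by
  have hconj : a⁻¹ * (a * b⁻¹ * (a ^ 2)⁻¹ * b⁻¹ * a * b ^ 2) * a⁻¹⁻¹ =
      (b * a ^ 2 * b)⁻¹ * (a * b ^ 2 * a) := by
    simp only [sq]; group
  rw [← conj_eq_one_iff (a := a⁻¹), hconj, inv_mul_eq_one, eq_comm]

theorem commute_mul_conj_iff_mul_sq_mul_eq :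
    Commute (a * b) (b * (a * b) * b⁻¹) ↔ a * b ^ 2 * a = b * a ^ 2 * b := by
  have hleft : a * b * (b * (a * b) * b⁻¹) = a * b ^ 2 * a := by
    simp only [sq]; group
  have hright : b * (a * b) * b⁻¹ * (a * b) = b * a ^ 2 * b := by
    simp only [sq]; group
  rw [Commute, SemiconjBy, hleft, hright]

theorem Commute.of_mul_left {a b : G} (h : Commute (a * b) b) : Commute a b := by
  simpa using h.mul_left (Commute.refl b).inv_left

end

/-- In a conjugation-commutative group, the relation `a b⁻¹ a⁻² b⁻¹ a b² = 1`
forces `a` and `b` to commute. -/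
theorem stmt7 {G : Type*} [Group G]
    (hCC : ∀ x y : G, Commute x (y * x * y⁻¹) → Commute x y)
    (a b : G) (hrel : a * b⁻¹ * (a ^ 2)⁻¹ * b⁻¹ * a * b ^ 2 = 1) :
    Commute a b := by
  have hconj : Commute (a * b) (b * (a * b) * b⁻¹) :=
    (commute_mul_conj_iff_mul_sq_mul_eq a b).mpr ((rel_eq_one_iff_mul_sq_mul_eq a b).mp hrel)
  exact (hCC (a * b) b hconj).of_mul_left
end

section
/- Let G be a power-commutative group and let a, b ∈ G satisfy a·b⁻³·a·b²·a²·b² = 1. Then a and b commute. -/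
/-!
Put `u = a b²`. Conjugating the relation by `u` turns it into `u² b⁻² u² = b⁵`, and any
`x` with `x c x = d` for commuting `c, d` commutes with `c d`; here `c d = b³`, so `u²`
commutes with `b³`. Power-commutativity upgrades this to `u b = b u`, and then
`a = u b⁻²` commutes with `b`.
-/

section

variable {G : Type*} [Group G]

theorem Commute.mul_of_mul_mul_eq {x c d : G} (h : x * c * x = d) (hcd : Commute c d) :
    Commute x (c * d) := by
  subst h
  calc x * (c * (x * c * x)) = (x * c * x) * c * x := by group
    _ = c * (x * c * x) * x := by rw [← hcd.eq]

theorem sq_mul_inv_sq_mul_sq_eq_pow_five {a b : G}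
    (hrel : a * (b ^ 3)⁻¹ * a * b ^ 2 * a ^ 2 * b ^ 2 = 1) :
    (a * b ^ 2) ^ 2 * (b ^ 2)⁻¹ * (a * b ^ 2) ^ 2 = b ^ 5 := by
  have conj : (a * b ^ 2) ^ 2 * (b ^ 2)⁻¹ * (a * b ^ 2) ^ 2
      = b ^ 5 * ((a * b ^ 2)⁻¹ * (a * (b ^ 3)⁻¹ * a * b ^ 2 * a ^ 2 * b ^ 2) * (a * b ^ 2)) := by
    simp only [pow_succ, pow_zero, one_mul, mul_inv_rev, mul_assoc, inv_mul_cancel_left,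
      mul_inv_cancel_left]
  rw [conj, hrel, mul_one, inv_mul_cancel, mul_one]

end

/-- In a power-commutative group, the relation `a b⁻³ a b² a² b² = 1`
forces `a` and `b` to commute. -/
theorem stmt8 {G : Type*} [Group G]
    (hPC : ∀ x y : G, ∀ p q : ℤ, p ≠ 0 → q ≠ 0 → Commute (x ^ p) (y ^ q) → Commute x y)
    (a b : G) (hrel : a * (b ^ 3)⁻¹ * a * b ^ 2 * a ^ 2 * b ^ 2 = 1) :
    Commute a b := by
  set u := a * b ^ 2
  have hpow : Commute (u ^ 2) (b ^ 3) := by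
    have h := Commute.mul_of_mul_mul_eq (sq_mul_inv_sq_mul_sq_eq_pow_five hrel)
      ((Commute.refl b).pow_pow 2 5).inv_left
    rwa [inv_mul_eq_iff_eq_mul.mpr (pow_add b 2 3)] at h
  have hub : Commute u b := hPC u b 2 3 two_ne_zero three_ne_zero (by exact_mod_cast hpow)
  have hab : Commute (u * (b ^ 2)⁻¹) b := hub.mul_left ((Commute.refl b).pow_left 2).inv_left
  simpa [u, mul_assoc] using hab
end

section
/- Let G be a power-commutative group and let a, b ∈ G satisfy a·b²·a·b⁻¹·a·b²·a²·b²·a·b⁻¹ = 1. Then a and b commute. -/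
/-!
With `y = a b² a b⁻¹` the relation reads `y² b y = 1`, so `b = y⁻³` and then `a y⁻⁶ a = y⁻²`.
Hence `(a y⁻⁶)² = y⁻⁸` commutes with `y`; power-commutativity makes `a y⁻⁶`, hence `a`, commute
with `y`, and so with its power `b`.
-/

def IsPowerCommutative (G : Type*) [Group G] : Prop :=
  ∀ x y : G, ∀ p q : ℤ, p ≠ 0 → q ≠ 0 → Commute (x ^ p) (y ^ q) → Commute x y

/-- `(a z^m)² = z^(n+m)` commutes with `z`. -/
theorem IsPowerCommutative.commute_of_mul_zpow_mul_eq_zpow {G : Type*} [Group G]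
    (hPC : IsPowerCommutative G) {a z : G} {m n : ℤ} (h : a * z ^ m * a = z ^ n) :
    Commute a z := by
  have hsq : (a * z ^ m) ^ (2 : ℤ) = z ^ (n + m) := by
    rw [zpow_add, ← h, zpow_two]
    group
  have hcomm : Commute (a * z ^ m) z :=
    hPC _ _ 2 1 two_ne_zero one_ne_zero (hsq ▸ Commute.zpow_zpow_self z _ _)
  simpa using hcomm.mul_left (Commute.zpow_self z m).inv_left

section Relation

variable {G : Type*} [Group G] {a b : G}

theorem eq_zpow_neg_three_of_rel
    (hrel : a * b ^ 2 * a * b⁻¹ * a * b ^ 2 * a ^ 2 * b ^ 2 * a * b⁻¹ = 1) :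
    b = (a * b ^ 2 * a * b⁻¹) ^ (-3 : ℤ) := by
  have hy : (a * b ^ 2 * a * b⁻¹) ^ 2 * b * (a * b ^ 2 * a * b⁻¹) = 1 := by
    rw [← hrel]
    simp only [pow_two]
    group
  generalize a * b ^ 2 * a * b⁻¹ = y at hy ⊢
  calc b = y ^ (-2 : ℤ) * (y ^ 2 * b * y) * y⁻¹ := by group
    _ = y ^ (-3 : ℤ) := by rw [hy]; group

theorem mul_zpow_mul_eq_zpow_of_rel
    (hrel : a * b ^ 2 * a * b⁻¹ * a * b ^ 2 * a ^ 2 * b ^ 2 * a * b⁻¹ = 1) :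
    a * (a * b ^ 2 * a * b⁻¹) ^ (-6 : ℤ) * a = (a * b ^ 2 * a * b⁻¹) ^ (-2 : ℤ) := by
  have hb := eq_zpow_neg_three_of_rel hrel
  have hab : a * b ^ 2 * a = (a * b ^ 2 * a * b⁻¹) * b := by group
  generalize a * b ^ 2 * a * b⁻¹ = y at hb hab ⊢
  rw [hb] at hab
  calc a * y ^ (-6 : ℤ) * a = a * (y ^ (-3 : ℤ)) ^ 2 * a := by group
    _ = y * y ^ (-3 : ℤ) := hab
    _ = y ^ (-2 : ℤ) := by group

end Relation

/-- In a power-commutative group, the relation `a b² a b⁻¹ a b² a² b² a b⁻¹ = 1`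
forces `a` and `b` to commute. -/
theorem stmt9 {G : Type*} [Group G]
    (hPC : ∀ x y : G, ∀ p q : ℤ, p ≠ 0 → q ≠ 0 → Commute (x ^ p) (y ^ q) → Commute x y)
    (a b : G) (hrel : a * b ^ 2 * a * b⁻¹ * a * b ^ 2 * a ^ 2 * b ^ 2 * a * b⁻¹ = 1) :
    Commute a b := by
  have hcomm : Commute a (a * b ^ 2 * a * b⁻¹) :=
    IsPowerCommutative.commute_of_mul_zpow_mul_eq_zpow hPC (mul_zpow_mul_eq_zpow_of_rel hrel)
  rw [eq_zpow_neg_three_of_rel hrel]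
  exact hcomm.zpow_right _
end

section
/- Let G be a power-commutative group and let a, b ∈ G satisfy a³·b²·a³·b·a⁻²·b = 1. Then a and b commute. -/
/-!
The relation says `b a³ b² a³ b = a²`, i.e. `x := b a³ b` is a square root of `a²`.
Power-commutativity makes `x` commute with `a`, hence with `a³`, so `b` commutes with
`(b a³)² = x a³`. Two more applications of power-commutativity give first that `b` commutes with
`b a³`, hence with `a³`, and then with `a`.
-/

def PowerCommutative (G : Type*) [Group G] : Prop :=
  ∀ x y : G, ∀ p q : ℤ, p ≠ 0 → q ≠ 0 → Commute (x ^ p) (y ^ q) → Commute x y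

namespace PowerCommutative

variable {G : Type*} [Group G]

theorem commute_of_pow_left (hG : PowerCommutative G) {x y : G} {n : ℕ} (hn : n ≠ 0)
    (h : Commute (x ^ n) y) : Commute x y :=
  hG x y n 1 (Int.natCast_ne_zero.mpr hn) one_ne_zero (by rwa [zpow_natCast, zpow_one])

theorem commute_of_pow_right (hG : PowerCommutative G) {x y : G} {n : ℕ} (hn : n ≠ 0)
    (h : Commute x (y ^ n)) : Commute x y :=
  (hG.commute_of_pow_left hn h.symm).symm

end PowerCommutative

section Words

variable {G : Type*} [Group G]

theorem sq_mul_pow_three_mul_eq_sq_of_relation {a b : G}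
    (hrel : a ^ 3 * b ^ 2 * a ^ 3 * b * (a ^ 2)⁻¹ * b = 1) :
    (b * a ^ 3 * b) ^ 2 = a ^ 2 := by
  have key : a ^ 3 * b ^ 2 * a ^ 3 = b⁻¹ * a ^ 2 * b⁻¹ := by
    rw [← mul_inv_eq_one]
    simpa [mul_inv_rev, mul_assoc] using hrel
  calc (b * a ^ 3 * b) ^ 2
      _ = b * (a ^ 3 * b ^ 2 * a ^ 3) * b := by simp only [sq, mul_assoc]
      _ = a ^ 2 := by rw [key]; group

theorem commute_sq_mul_of_commute_mul_mul {b c : G} (h : Commute (b * c * b) c) :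
    Commute b ((b * c) ^ 2) :=
  calc b * (b * c) ^ 2 = b * ((b * c * b) * c) := by simp only [sq, mul_assoc]
    _ = b * (c * (b * c * b)) := by rw [h.eq]
    _ = (b * c) ^ 2 * b := by simp only [sq, mul_assoc]

theorem Commute.of_mul_right_self {b c : G} (h : Commute b (b * c)) : Commute b c := by
  simpa using (Commute.refl b).inv_right.mul_right h

end Words

/-- In a power-commutative group, the relation `a³ b² a³ b a⁻² b = 1`
forces `a` and `b` to commute. -/
theorem stmt10 {G : Type*} [Group G]
    (hPC : ∀ x y : G, ∀ p q : ℤ, p ≠ 0 → q ≠ 0 → Commute (x ^ p) (y ^ q) → Commute x y)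
    (a b : G) (hrel : a ^ 3 * b ^ 2 * a ^ 3 * b * (a ^ 2)⁻¹ * b = 1) :
    Commute a b := by
  have hG : PowerCommutative G := hPC
  have hxa : Commute (b * a ^ 3 * b) a :=
    hG.commute_of_pow_left two_ne_zero
      (sq_mul_pow_three_mul_eq_sq_of_relation hrel ▸ (Commute.refl a).pow_left 2)
  have hb_ba3 : Commute b (b * a ^ 3) :=
    hG.commute_of_pow_right two_ne_zero (commute_sq_mul_of_commute_mul_mul (hxa.pow_right 3))
  exact (hG.commute_of_pow_right three_ne_zero hb_ba3.of_mul_right_self).symm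
end

section
/- Let G be a power-commutative and commutative-transitive group, and let a, b, c ∈ G with c ≠ 1 satisfy a²·c·b⁻¹·c·b = 1 and b²·c² = 1. Then a, b, and c pairwise commute. -/
namespace IsPowerCommutative

variable {G : Type*} [Group G]

theorem commute_of_commute_sq (hG : IsPowerCommutative G) {x y : G}
    (h : Commute (x ^ 2) (y ^ 2)) : Commute x y :=
  hG x y 2 2 two_ne_zero two_ne_zero (by simpa only [zpow_ofNat] using h)

theorem commute_of_sq_mul_sq_eq_one (hG : IsPowerCommutative G) {x y : G}
    (h : x ^ 2 * y ^ 2 = 1) : Commute x y := by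
  refine hG.commute_of_commute_sq ?_
  rw [eq_inv_of_mul_eq_one_left h]
  exact (Commute.refl _).inv_left

end IsPowerCommutative

theorem stmt11_general {G : Type*} [Group G]
    (hPC : ∀ x y : G, ∀ p q : ℤ, p ≠ 0 → q ≠ 0 → Commute (x ^ p) (y ^ q) → Commute x y)
    (a b c : G)
    (hrel1 : a ^ 2 * c * b⁻¹ * c * b = 1) (hrel2 : b ^ 2 * c ^ 2 = 1) :
    Commute a b ∧ Commute a c ∧ Commute b c := by
  have hG : IsPowerCommutative G := hPC
  have hbc : Commute b c := hG.commute_of_sq_mul_sq_eq_one hrel2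
  have hconj : b⁻¹ * c * b = c := by rw [hbc.inv_left.eq, inv_mul_cancel_right]
  have ha2c2 : a ^ 2 * c ^ 2 = 1 := by
    calc a ^ 2 * c ^ 2 = a ^ 2 * c * (b⁻¹ * c * b) := by rw [hconj, sq c, mul_assoc]
      _ = 1 := by rw [← hrel1]; group
  have hab : Commute a b := by
    refine hG.commute_of_commute_sq ?_
    rw [eq_inv_of_mul_eq_one_left ha2c2, eq_inv_of_mul_eq_one_left hrel2]
  exact ⟨hab, hG.commute_of_sq_mul_sq_eq_one ha2c2, hbc⟩

/-- In a power-commutative, commutative-transitive group, the relations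
`a² c b⁻¹ c b = 1` and `b² c² = 1`, with `c ≠ 1`, force `a`, `b`, `c` to
pairwise commute. -/
theorem stmt11 {G : Type*} [Group G]
    (hPC : ∀ x y : G, ∀ p q : ℤ, p ≠ 0 → q ≠ 0 → Commute (x ^ p) (y ^ q) → Commute x y)
    (hCT : ∀ x y z : G, z ≠ 1 → Commute x z → Commute y z → Commute x y)
    (a b c : G) (hc : c ≠ 1)
    (hrel1 : a ^ 2 * c * b⁻¹ * c * b = 1) (hrel2 : b ^ 2 * c ^ 2 = 1) :
    Commute a b ∧ Commute a c ∧ Commute b c :=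
  stmt11_general hPC a b c hrel1 hrel2
end

section
/- Let G be a power-commutative group and let a, b ∈ G satisfy a²·b²·a²·b²·a³·b²·a²·b²·a²·b²·a·b⁻¹·a·b² = 1. Then a and b commute. -/
namespace IsPowerCommutative

variable {G : Type*} [Group G]

theorem commute_of_pow_commute (hG : IsPowerCommutative G) {x y : G} {m n : ℕ}
    (hm : m ≠ 0) (hn : n ≠ 0) (h : Commute (x ^ m) (y ^ n)) : Commute x y :=
  hG x y m n (Int.natCast_ne_zero.mpr hm) (Int.natCast_ne_zero.mpr hn) (by simpa using h)

theorem commute_of_pow_four_eq (hG : IsPowerCommutative G) {x u : G}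
    (h : x ^ 4 = u ^ 2 * x ^ 3 * u ^ 2) : Commute x u := by
  have hx7 : x ^ 7 = (x ^ 3 * u ^ 2) ^ 2 := by
    rw [sq, show 7 = 3 + 4 from rfl, pow_add, h]
    simp only [mul_assoc]
  have hxw : Commute x (x ^ 3 * u ^ 2) :=
    hG.commute_of_pow_commute (m := 7) (n := 2) (by norm_num) (by norm_num) (by rw [hx7])
  have hxu2 : Commute x (u ^ 2) := by
    simpa using ((Commute.refl x).pow_right 3).inv_right.mul_right hxw
  exact hG.commute_of_pow_commute (m := 1) (n := 2) one_ne_zero two_ne_zero (by simpa using hxu2)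

end IsPowerCommutative

theorem eq_cube_mul_mul_cube_of_relation {G : Type*} [Group G] {a b : G}
    (hrel : a ^ 2 * b ^ 2 * a ^ 2 * b ^ 2 * a ^ 3 * b ^ 2 * a ^ 2 * b ^ 2 * a ^ 2 * b ^ 2
      * a * b⁻¹ * a * b ^ 2 = 1) :
    b = (a * b ^ 2 * a) ^ 3 * a * (a * b ^ 2 * a) ^ 3 := by
  have hconj : (a * b ^ 2 * a) ^ 3 * a * (a * b ^ 2 * a) ^ 3 =
      (a * b ^ 2) * (a ^ 2 * b ^ 2 * a ^ 2 * b ^ 2 * a ^ 3 * b ^ 2 * a ^ 2 * b ^ 2 * a ^ 2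
        * b ^ 2 * a * b⁻¹ * a * b ^ 2) * (a * b ^ 2)⁻¹ * b := by
    simp [pow_succ, mul_assoc]
  rw [hconj, hrel]
  group

theorem pow_four_eq_of_eq_mul_pow_mul {G : Type*} [Group G] {a b x u : G}
    (hx : x = a * b ^ 2 * a) (ha : a = (x ^ 3)⁻¹ * u) (hb : b = u * x ^ 3) :
    x ^ 4 = u ^ 2 * x ^ 3 * u ^ 2 := by
  rw [ha, hb] at hx
  calc x ^ 4 = x ^ 3 * x := pow_succ x 3
    _ = u ^ 2 * x ^ 3 * u ^ 2 := by
      nth_rewrite 2 [hx]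
      simp only [sq]
      group

/-- In a power-commutative group, the relation
`a² b² a² b² a³ b² a² b² a² b² a b⁻¹ a b² = 1` forces `a` and `b` to commute. -/
theorem stmt13 {G : Type*} [Group G]
    (hPC : ∀ x y : G, ∀ p q : ℤ, p ≠ 0 → q ≠ 0 → Commute (x ^ p) (y ^ q) → Commute x y)
    (a b : G)
    (hrel : a ^ 2 * b ^ 2 * a ^ 2 * b ^ 2 * a ^ 3 * b ^ 2 * a ^ 2 * b ^ 2 * a ^ 2 * b ^ 2
      * a * b⁻¹ * a * b ^ 2 = 1) :
    Commute a b := by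
  have hG : IsPowerCommutative G := hPC
  set x := a * b ^ 2 * a with hx
  set u := x ^ 3 * a
  have ha : a = (x ^ 3)⁻¹ * u := (inv_mul_cancel_left _ _).symm
  have hb : b = u * x ^ 3 := eq_cube_mul_mul_cube_of_relation hrel
  have hxu : Commute (x ^ 3) u :=
    (hG.commute_of_pow_four_eq (pow_four_eq_of_eq_mul_pow_mul hx ha hb)).pow_left 3
  rw [ha, hb]
  exact (hxu.inv_left.mul_left (Commute.refl u)).mul_right
    ((Commute.refl _).inv_left.mul_left hxu.symm)
end

section
/- Let G be a power-commutative group and let a, b ∈ G satisfy a²·b·a²·b⁻²·a²·b = 1. Then a and b commute. -/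
/-! With `x = a²` and `φ` conjugation by `b`, the relation says `x · φ(x) · φ⁻¹(x) = 1`, so its
cyclic rotation gives `y · φ(y) · φ²(y) = 1` for `y = φ⁻¹(x)`. For any endomorphism `f` of a group,
`y · f(y) · f²(y) = 1` forces `f³(y) = y`: apply `f` and compare. Hence `a²` commutes with `b³`,
and power-commutativity upgrades this to `a b = b a`. -/

theorem MonoidHom.apply_apply_apply_eq_of_mul_mul_eq_one {G : Type*} [Group G] (f : G →* G)
    {y : G} (h : y * f y * f (f y) = 1) : f (f (f y)) = y := by
  have hf : f y * f (f y) * f (f (f y)) = 1 := by simpa only [map_mul, map_one] using congrArg f h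
  rw [mul_assoc, mul_eq_one_iff_inv_eq] at h
  rwa [← h, inv_mul_eq_one, eq_comm] at hf

theorem commute_pow_three_of_mul_mul_inv_sq_mul_mul_eq_one {G : Type*} [Group G] {x b : G}
    (h : x * b * x * (b ^ 2)⁻¹ * x * b = 1) : Commute x (b ^ 3) := by
  let φ : G →* G := MulAut.conj b
  have hφ (g : G) : φ g = b * g * b⁻¹ := rfl
  have hy : (b⁻¹ * x * b) * φ (b⁻¹ * x * b) * φ (φ (b⁻¹ * x * b)) = 1 := by
    rw [hφ, hφ, show b⁻¹ * x * b * (b * (b⁻¹ * x * b) * b⁻¹) * (b * (b * (b⁻¹ * x * b) * b⁻¹) * b⁻¹)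
      = (b⁻¹ * x * b) * (x * b * x * (b ^ 2)⁻¹ * x * b) * (b⁻¹ * x * b)⁻¹ by group, h]
    group
  have h3 := φ.apply_apply_apply_eq_of_mul_mul_eq_one hy
  simp only [hφ] at h3
  calc x * b ^ 3 = b * (b⁻¹ * x * b) * b⁻¹ * b ^ 3 := by group
    _ = b * (b * (b * (b * (b⁻¹ * x * b) * b⁻¹) * b⁻¹) * b⁻¹) * b⁻¹ * b ^ 3 := by rw [h3]
    _ = b ^ 3 * x := by simp only [pow_three]; group

/-- In a power-commutative group, the relation `a² b a² b⁻² a² b = 1`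
forces `a` and `b` to commute. -/
theorem stmt14 {G : Type*} [Group G]
    (hPC : ∀ x y : G, ∀ p q : ℤ, p ≠ 0 → q ≠ 0 → Commute (x ^ p) (y ^ q) → Commute x y)
    (a b : G) (hrel : a ^ 2 * b * a ^ 2 * (b ^ 2)⁻¹ * a ^ 2 * b = 1) :
    Commute a b := by
  have hc : Commute (a ^ 2) (b ^ 3) := commute_pow_three_of_mul_mul_inv_sq_mul_mul_eq_one hrel
  exact hPC a b 2 3 two_ne_zero three_ne_zero (by exact_mod_cast hc)
end

section
/- Let G be a conjugation-commutative group and let a, b ∈ G satisfy both a·b³·a·b·a⁻²·b = 1 and a·b·a⁻¹·b·a·b⁻¹·a⁻¹·b⁻¹ = 1. Then a and b commute. -/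
/-- The relation is the commutator `⁅a b a⁻¹, b⁆` written out. -/
theorem commute_conj_of_mul_eq_one {G : Type*} [Group G] {a b : G}
    (h : a * b * a⁻¹ * b * a * b⁻¹ * a⁻¹ * b⁻¹ = 1) : Commute (a * b * a⁻¹) b := by
  rw [← commutatorElement_eq_one_iff_commute, commutatorElement_def, ← h]
  group

theorem stmt17_general {G : Type*} [Group G]
    (hCC : ∀ x y : G, Commute x (y * x * y⁻¹) → Commute x y)
    (a b : G)
    (hrel2 : a * b * a⁻¹ * b * a * b⁻¹ * a⁻¹ * b⁻¹ = 1) :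
    Commute a b :=
  (hCC b a (commute_conj_of_mul_eq_one hrel2).symm).symm

/-- In a conjugation-commutative group, the relations `a b³ a b a⁻² b = 1` and
`a b a⁻¹ b a b⁻¹ a⁻¹ b⁻¹ = 1` force `a` and `b` to commute. -/
theorem stmt17 {G : Type*} [Group G]
    (hCC : ∀ x y : G, Commute x (y * x * y⁻¹) → Commute x y)
    (a b : G)
    (hrel1 : a * b ^ 3 * a * b * (a ^ 2)⁻¹ * b = 1)
    (hrel2 : a * b * a⁻¹ * b * a * b⁻¹ * a⁻¹ * b⁻¹ = 1) :
    Commute a b :=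
  stmt17_general hCC a b hrel2
end

section
/- Let G be a power-commutative and conjugation-commutative group, and let a, b ∈ G satisfy both a²·b²·a⁻¹·b⁻¹·a⁻¹·b² = 1 and a·b²·a⁻¹·b·a⁻¹·b²·a·b⁻² = 1. Then a and b commute. -/
/-!
The first relation reads `a b a = b² a² b²`; substituting it into the second shows that `b²`
commutes with its conjugate `a b² a⁻¹`. Conjugation commutativity then makes `b²` commute with
`a`, and power commutativity removes the square.
-/

theorem commute_sq_conj_of_relations {G : Type*} [Group G] {a b : G}
    (hrel1 : a ^ 2 * b ^ 2 * a⁻¹ * b⁻¹ * a⁻¹ * b ^ 2 = 1)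
    (hrel2 : a * b ^ 2 * a⁻¹ * b * a⁻¹ * b ^ 2 * a * (b ^ 2)⁻¹ = 1) :
    Commute (b ^ 2) (a * b ^ 2 * a⁻¹) := by
  have haba : b ^ 2 * a ^ 2 * b ^ 2 = a * b * a := by
    calc b ^ 2 * a ^ 2 * b ^ 2
        = b ^ 2 * (a ^ 2 * b ^ 2 * a⁻¹ * b⁻¹ * a⁻¹ * b ^ 2) * (b ^ 2)⁻¹ * (a * b * a) := by group
      _ = a * b * a := by rw [hrel1]; group
  have hb2 : b ^ 2 = a * b ^ 2 * a⁻¹ * b * a⁻¹ * (b ^ 2 * a) := by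
    rw [← mul_assoc]; exact (mul_inv_eq_one.mp hrel2).symm
  calc b ^ 2 * (a * b ^ 2 * a⁻¹)
      = a * b ^ 2 * a⁻¹ * b * a⁻¹ * (b ^ 2 * a ^ 2 * b ^ 2) * a⁻¹ := by
        nth_rewrite 1 [hb2]; simp only [sq]; group
    _ = a * b ^ 2 * a⁻¹ * b * a⁻¹ * (a * b * a) * a⁻¹ := by rw [haba]
    _ = a * b ^ 2 * a⁻¹ * b ^ 2 := by simp only [sq]; group

/-- In a power-commutative, conjugation-commutative group, the relations
`a² b² a⁻¹ b⁻¹ a⁻¹ b² = 1` and `a b² a⁻¹ b a⁻¹ b² a b⁻² = 1` force `a` and `b`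
to commute. -/
theorem stmt18 {G : Type*} [Group G]
    (hPC : ∀ x y : G, ∀ p q : ℤ, p ≠ 0 → q ≠ 0 → Commute (x ^ p) (y ^ q) → Commute x y)
    (hCC : ∀ x y : G, Commute x (y * x * y⁻¹) → Commute x y)
    (a b : G)
    (hrel1 : a ^ 2 * b ^ 2 * a⁻¹ * b⁻¹ * a⁻¹ * b ^ 2 = 1)
    (hrel2 : a * b ^ 2 * a⁻¹ * b * a⁻¹ * b ^ 2 * a * (b ^ 2)⁻¹ = 1) :
    Commute a b := by
  have hb2a : Commute (b ^ 2) a := hCC _ _ (commute_sq_conj_of_relations hrel1 hrel2)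
  refine hPC a b 1 2 one_ne_zero two_ne_zero ?_
  rw [zpow_one, zpow_ofNat]
  exact hb2a.symm
end
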